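/- arXiv:2112.03995 — 5 statements merged into one kernel-verified Lean document; each statement's English description precedes it below -/
import Mathlib

section
/- Let A be a real symmetric n×n matrix and B a real n×n matrix with B + Bᵀ positive definite. Then every eigenvalue of B⁻¹A lying on the imaginary axis is zero; that is, if B⁻¹A v = iτ v with τ real nonzero and v a complex vector, then v = 0. -/
/-!
If `B⁻¹ A v = iτ v` then `A v = iτ B v`, so `v* A v = iτ · v* B v`. The left side is real since
`A` is Hermitian, hence `Re (v* B v) = 0` when `τ ≠ 0`. But `2 Re (v* B v) = v* (B + Bᴴ) v`, which
is positive for `v ≠ 0`; the same identity shows that `B` is invertible. Positive definiteness of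
the real matrix `B + Bᵀ` passes to its complexification because
`Re (v* M v) = xᵀ M x + yᵀ M y` for `v = x + i y`.
-/

open Matrix Complex
open scoped ComplexOrder

namespace Matrix

variable {n : Type*} [Fintype n]

section RCLike

variable {𝕜 : Type*} [RCLike 𝕜]

lemma star_star_dotProduct_mulVec (M : Matrix n n 𝕜) (v : n → 𝕜) :
    star (star v ⬝ᵥ M *ᵥ v) = star v ⬝ᵥ Mᴴ *ᵥ v := by
  rw [← star_dotProduct_star, star_star, star_mulVec, ← dotProduct_mulVec]

lemma IsHermitian.im_star_dotProduct_mulVec {M : Matrix n n 𝕜} (hM : M.IsHermitian)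
    (v : n → 𝕜) : RCLike.im (star v ⬝ᵥ M *ᵥ v) = 0 := by
  rw [← RCLike.conj_eq_iff_im, ← RCLike.star_def, star_star_dotProduct_mulVec, hM.eq]

lemma re_star_dotProduct_add_conjTranspose_mulVec (M : Matrix n n 𝕜) (v : n → 𝕜) :
    RCLike.re (star v ⬝ᵥ (M + Mᴴ) *ᵥ v) = 2 * RCLike.re (star v ⬝ᵥ M *ᵥ v) := by
  rw [add_mulVec, dotProduct_add, ← star_star_dotProduct_mulVec, map_add, RCLike.star_def,
    RCLike.conj_re, two_mul]

lemma eq_zero_of_re_star_dotProduct_mulVec_eq_zero {M : Matrix n n 𝕜} (hM : (M + Mᴴ).PosDef)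
    {v : n → 𝕜} (hv : RCLike.re (star v ⬝ᵥ M *ᵥ v) = 0) : v = 0 := by
  by_contra hv0
  have := hM.re_dotProduct_pos hv0
  rw [re_star_dotProduct_add_conjTranspose_mulVec, hv, mul_zero] at this
  exact this.false

lemma isUnit_det_of_posDef_add_conjTranspose [DecidableEq n] {M : Matrix n n 𝕜}
    (hM : (M + Mᴴ).PosDef) : IsUnit M.det := by
  rw [isUnit_iff_ne_zero, Ne, ← exists_mulVec_eq_zero_iff]
  rintro ⟨v, hv0, hv⟩
  exact hv0 (eq_zero_of_re_star_dotProduct_mulVec_eq_zero hM (by simp [hv]))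

end RCLike

lemma eq_zero_of_mulVec_eq_I_mul_smul_mulVec {M N : Matrix n n ℂ} (hM : M.IsHermitian)
    (hN : (N + Nᴴ).PosDef) {τ : ℝ} (hτ : τ ≠ 0) {v : n → ℂ}
    (hv : M *ᵥ v = (I * τ) • N *ᵥ v) : v = 0 := by
  refine eq_zero_of_re_star_dotProduct_mulVec_eq_zero hN ?_
  have hq : star v ⬝ᵥ M *ᵥ v = I * τ * (star v ⬝ᵥ N *ᵥ v) := by
    rw [hv, dotProduct_smul, smul_eq_mul]
  simpa [hq, hτ] using hM.im_star_dotProduct_mulVec v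

lemma eq_zero_of_inv_mul_mulVec_eq_I_mul_smul [DecidableEq n] {M N : Matrix n n ℂ}
    (hM : M.IsHermitian) (hN : (N + Nᴴ).PosDef) {τ : ℝ} (hτ : τ ≠ 0) {v : n → ℂ}
    (hv : (N⁻¹ * M) *ᵥ v = (I * τ) • v) : v = 0 := by
  refine eq_zero_of_mulVec_eq_I_mul_smul_mulVec hM hN hτ ?_
  rw [← mulVec_smul, ← hv, mulVec_mulVec,
    mul_nonsing_inv_cancel_left _ _ (isUnit_det_of_posDef_add_conjTranspose hN)]

lemma re_star_dotProduct_map_ofReal_mulVec (M : Matrix n n ℝ) (v : n → ℂ) :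
    (star v ⬝ᵥ M.map (algebraMap ℝ ℂ) *ᵥ v).re
      = (fun i => (v i).re) ⬝ᵥ M *ᵥ (fun i => (v i).re)
        + (fun i => (v i).im) ⬝ᵥ M *ᵥ (fun i => (v i).im) := by
  simp only [dotProduct, mulVec, Pi.star_apply, Finset.mul_sum, Matrix.map_apply,
    Complex.re_sum, ← Finset.sum_add_distrib]
  refine Finset.sum_congr rfl fun i _ => Finset.sum_congr rfl fun j _ => ?_
  simp [Complex.mul_re]

lemma PosDef.map_ofReal {M : Matrix n n ℝ} (hM : M.PosDef) :
    (M.map (algebraMap ℝ ℂ)).PosDef := by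
  have hH : (M.map (algebraMap ℝ ℂ)).IsHermitian := hM.isHermitian.map _ fun _ => by simp
  refine .of_dotProduct_mulVec_pos hH fun v hv =>
    RCLike.pos_iff.mpr ⟨?_, hH.im_star_dotProduct_mulVec v⟩
  rw [RCLike.re_to_complex, re_star_dotProduct_map_ofReal_mulVec]
  have hnonneg (x : n → ℝ) : 0 ≤ x ⬝ᵥ M *ᵥ x := by
    simpa using hM.posSemidef.dotProduct_mulVec_nonneg x
  have hpos {x : n → ℝ} (hx : x ≠ 0) : 0 < x ⬝ᵥ M *ᵥ x := by
    simpa using hM.dotProduct_mulVec_pos hx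
  by_cases hre : (fun i => (v i).re) = 0
  · have him : (fun i => (v i).im) ≠ 0 := fun him =>
      hv (funext fun i => Complex.ext (congrFun hre i) (congrFun him i))
    exact add_pos_of_nonneg_of_pos (hnonneg _) (hpos him)
  · exact add_pos_of_pos_of_nonneg (hpos hre) (hnonneg _)

end Matrix

/-- If `A` is a real symmetric `n×n` matrix and `B` a real `n×n` matrix with `B + Bᵀ`
positive definite, then every eigenvalue of `B⁻¹A` on the imaginary axis is zero:
if `B⁻¹A v = iτ v` with `τ` real nonzero, then `v = 0`. -/
theorem stmt0 {n : ℕ} (A B : Matrix (Fin n) (Fin n) ℝ)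
    (hA : A.IsSymm) (hB : (B + Bᵀ).PosDef)
    (τ : ℝ) (hτ : τ ≠ 0) (v : Fin n → ℂ)
    (hv : ((B.map (algebraMap ℝ ℂ))⁻¹ * (A.map (algebraMap ℝ ℂ))).mulVec v
      = (Complex.I * (τ : ℂ)) • v) :
    v = 0 := by
  have hsemiconj : Function.Semiconj (algebraMap ℝ ℂ) star star := fun _ => by simp
  have hAC : (A.map (algebraMap ℝ ℂ)).IsHermitian :=
    (isHermitian_iff_isSymm.mpr hA).map _ hsemiconj
  have hBC : (B.map (algebraMap ℝ ℂ) + (B.map (algebraMap ℝ ℂ))ᴴ).PosDef := by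
    rw [← conjTranspose_map _ hsemiconj, conjTranspose_eq_transpose_of_trivial,
      ← Matrix.map_add _ (map_add _)]
    exact hB.map_ofReal
  exact eq_zero_of_inv_mul_mulVec_eq_I_mul_smul hAC hBC hτ hv
end

section
/- Let à be a real k×k matrix whose spectrum (over ℂ) contains no nonzero element of 2πi ℤ. Then the map C ↦ ∫₀¹ e^{Ã(1−s)} C ds from ℝᵏ to ℝᵏ is a linear isomorphism; equivalently, the matrix ∫₀¹ e^{Ãs} ds is invertible. -/
/-!
Write `B = ∫₀¹ e^{sA} ds`. Since `B` commutes with `A`, over `ℂ` the kernel of a singular `B` is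
`A`-invariant and so contains an eigenvector `w` of `A`, say `A w = μ w`. Then
`B w = (∫₀¹ e^{μs} ds) w = ((e^μ - 1) / μ) w` (read as `w` when `μ = 0`), so `e^μ = 1` with
`μ ≠ 0`, i.e. `μ ∈ 2πi(ℤ ∖ {0})`, which the spectral hypothesis excludes. A real matrix is
treated through its complexification, and `s ↦ 1 - s` turns `∫₀¹ e^{(1-s)A} ds` into `B`.
-/

open Matrix Complex Real intervalIntegral

-- Any submultiplicative norm would do: it only gives access to the analytic lemmas on `exp`.
attribute [local instance] Matrix.linftyOpNormedRing Matrix.linftyOpNormedAlgebra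

theorem Complex.exists_int_of_integral_exp_mul_eq_zero {μ : ℂ}
    (h : ∫ s in (0:ℝ)..1, Complex.exp (μ * s) = 0) :
    ∃ m : ℤ, m ≠ 0 ∧ 2 * π * I * m = μ := by
  have hμ : μ ≠ 0 := by
    rintro rfl
    simp at h
  rw [integral_exp_mul_complex hμ, div_eq_zero_iff, or_iff_left hμ] at h
  obtain ⟨m, hm⟩ := Complex.exp_eq_one_iff.mp (by simpa [sub_eq_zero] using h)
  refine ⟨m, ?_, by rw [hm]; ring⟩
  rintro rfl
  simp [hm] at hμ

namespace Matrix

section EntrywiseIntegral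

variable {l m n : Type*} [Fintype m] {𝕜 : Type*} [RCLike 𝕜] {a b : ℝ}

theorem mul_of_intervalIntegral (A : Matrix l m 𝕜) {f : ℝ → Matrix m n 𝕜}
    (hf : ∀ i j, IntervalIntegrable (fun s => f s i j) MeasureTheory.volume a b) :
    A * of (fun i j => ∫ s in a..b, f s i j) = of fun i j => ∫ s in a..b, (A * f s) i j := by
  ext i j
  simp only [mul_apply, of_apply]
  rw [integral_finsetSum fun k _ => (hf k j).const_mul _]
  simp_rw [integral_const_mul]

theorem of_intervalIntegral_mul {f : ℝ → Matrix l m 𝕜} (A : Matrix m n 𝕜)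
    (hf : ∀ i j, IntervalIntegrable (fun s => f s i j) MeasureTheory.volume a b) :
    of (fun i j => ∫ s in a..b, f s i j) * A = of fun i j => ∫ s in a..b, (f s * A) i j := by
  ext i j
  simp only [mul_apply, of_apply]
  rw [integral_finsetSum fun k _ => (hf i k).mul_const _]
  simp_rw [integral_mul_const]

theorem of_intervalIntegral_mulVec {f : ℝ → Matrix l m 𝕜} (v : m → 𝕜)
    (hf : ∀ i j, IntervalIntegrable (fun s => f s i j) MeasureTheory.volume a b) :
    of (fun i j => ∫ s in a..b, f s i j) *ᵥ v = fun i => ∫ s in a..b, (f s *ᵥ v) i := by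
  ext i
  simp only [mulVec, dotProduct, of_apply]
  rw [integral_finsetSum fun k _ => (hf i k).mul_const _]
  simp_rw [integral_mul_const]

end EntrywiseIntegral

section

variable {n : Type*} [Fintype n] [DecidableEq n] {𝕂 : Type*} [RCLike 𝕂]

theorem exp_mulVec_of_mulVec_eq_smul {M : Matrix n n 𝕂} {w : n → 𝕂} {μ : 𝕂}
    (hw : M *ᵥ w = μ • w) : NormedSpace.exp M *ᵥ w = NormedSpace.exp μ • w := by
  have hpow (k : ℕ) : M ^ k *ᵥ w = μ ^ k • w := by
    induction k with
    | zero => simp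
    | succ k ih => rw [pow_succ, ← mulVec_mulVec, hw, mulVec_smul, ih, smul_smul, ← pow_succ']
  let L : Matrix n n 𝕂 →L[𝕂] n → 𝕂 :=
    LinearMap.toContinuousLinearMap ((LinearMap.applyₗ w).comp Matrix.toLin'.toLinearMap)
  have hL (N : Matrix n n 𝕂) : L N = N *ᵥ w := rfl
  rw [congrFun (NormedSpace.exp_eq_tsum 𝕂) M, congrFun (NormedSpace.exp_eq_tsum 𝕂) μ, ← hL,
    L.map_tsum (NormedSpace.expSeries_summable' M),
    ← (NormedSpace.expSeries_summable' μ).tsum_smul_const]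
  simp only [hL, smul_mulVec, hpow, smul_assoc]

theorem continuous_exp_smul_apply (A : Matrix n n 𝕂) (i j : n) :
    Continuous fun s : ℝ => NormedSpace.exp (s • A) i j :=
  (NormedSpace.exp_continuous.comp (continuous_id.smul continuous_const)).matrix_elem i j

noncomputable def expIntegral (A : Matrix n n 𝕂) : Matrix n n 𝕂 :=
  of fun i j => ∫ s in (0:ℝ)..1, NormedSpace.exp (s • A) i j

theorem commute_expIntegral (A : Matrix n n 𝕂) : Commute A (expIntegral A) := by
  have hint (i j : n) :=
    (continuous_exp_smul_apply A i j).intervalIntegrable (μ := MeasureTheory.volume) 0 1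
  rw [Commute, SemiconjBy, expIntegral, mul_of_intervalIntegral A hint,
    of_intervalIntegral_mul A hint]
  simp_rw [((Commute.refl A).smul_right _).exp_right.eq]

theorem of_intervalIntegral_exp_one_sub_smul (A : Matrix n n 𝕂) :
    (of fun i j => ∫ s in (0:ℝ)..1, NormedSpace.exp ((1 - s) • A) i j) = expIntegral A := by
  ext i j
  simpa [expIntegral] using
    integral_comp_sub_left (a := 0) (b := 1) (fun s => NormedSpace.exp (s • A) i j) 1

end

section

variable {n : Type*} [Fintype n] [DecidableEq n] {K : Type*} [Field K]

theorem mem_spectrum_of_mulVec_eq_smul {A : Matrix n n K} {w : n → K} {μ : K}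
    (hw0 : w ≠ 0) (hw : A *ᵥ w = μ • w) : μ ∈ spectrum K A := by
  rw [spectrum.mem_iff, ← mulVec_injective_iff_isUnit]
  intro hinj
  refine hw0 (hinj ?_)
  simp [sub_mulVec, hw, Algebra.algebraMap_eq_smul_one, smul_mulVec]

theorem exists_eigenvector_mem_ker_of_commute [IsAlgClosed K] {A B : Matrix n n K}
    (hAB : Commute A B) (hB : B.det = 0) :
    ∃ μ : K, ∃ w : n → K, w ≠ 0 ∧ A *ᵥ w = μ • w ∧ B *ᵥ w = 0 := by
  set V := LinearMap.ker B.mulVecLin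
  have hV : ∀ x ∈ V, A.mulVecLin x ∈ V := fun x hx => by
    simp only [V, LinearMap.mem_ker, mulVecLin_apply] at hx ⊢
    rw [mulVec_mulVec, ← hAB.eq, ← mulVec_mulVec, hx, mulVec_zero]
  obtain ⟨v, hv0, hv⟩ := exists_mulVec_eq_zero_iff.mpr hB
  have : Nontrivial V := ⟨⟨⟨v, hv⟩, 0, fun h => hv0 (congrArg Subtype.val h)⟩⟩
  obtain ⟨μ, hμ⟩ := Module.End.exists_eigenvalue (A.mulVecLin.restrict hV)
  obtain ⟨w, hw⟩ := hμ.exists_hasEigenvector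
  refine ⟨μ, w, by simpa using hw.2, ?_, w.2⟩
  simpa [LinearMap.restrict_apply] using congrArg Subtype.val hw.apply_eq_smul

end

section

variable {n : Type*} [Fintype n] [DecidableEq n]

theorem expIntegral_mulVec_of_mulVec_eq_smul {A : Matrix n n ℂ} {w : n → ℂ} {μ : ℂ}
    (hw : A *ᵥ w = μ • w) :
    expIntegral A *ᵥ w = (∫ s in (0:ℝ)..1, Complex.exp (μ * s)) • w := by
  have hexp (s : ℝ) : NormedSpace.exp (s • A) *ᵥ w = Complex.exp (μ * s) • w := by
    rw [Complex.exp_eq_exp_ℂ]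
    refine exp_mulVec_of_mulVec_eq_smul ?_
    rw [smul_mulVec, hw, smul_comm, ← Complex.coe_smul, smul_smul]
  rw [expIntegral, of_intervalIntegral_mulVec w
    fun i j => (continuous_exp_smul_apply A i j).intervalIntegrable 0 1]
  ext i
  simp_rw [hexp, Pi.smul_apply, smul_eq_mul, integral_mul_const]

theorem exp_map_algebraMap (A : Matrix n n ℝ) :
    NormedSpace.exp (A.map (algebraMap ℝ ℂ)) = (NormedSpace.exp A).map (algebraMap ℝ ℂ) :=
  (NormedSpace.map_exp (algebraMap ℝ ℂ).mapMatrix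
    (continuous_id.matrix_map Complex.continuous_ofReal) A).symm

theorem expIntegral_map_algebraMap (A : Matrix n n ℝ) :
    expIntegral (A.map (algebraMap ℝ ℂ)) = (expIntegral A).map (algebraMap ℝ ℂ) := by
  have hsmul (s : ℝ) : s • A.map (algebraMap ℝ ℂ) = (s • A).map (algebraMap ℝ ℂ) := by
    ext
    simp [Complex.real_smul]
  ext i j
  simp only [expIntegral, of_apply, hsmul, exp_map_algebraMap, map_apply]
  exact integral_ofReal

theorem isUnit_expIntegral (A : Matrix n n ℂ)
    (hA : ∀ m : ℤ, m ≠ 0 → 2 * π * I * m ∉ spectrum ℂ A) : IsUnit (expIntegral A) := by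
  rw [isUnit_iff_isUnit_det, isUnit_iff_ne_zero]
  intro hdet
  obtain ⟨μ, w, hw0, hAw, hBw⟩ :=
    exists_eigenvector_mem_ker_of_commute (commute_expIntegral A) hdet
  rw [expIntegral_mulVec_of_mulVec_eq_smul hAw, smul_eq_zero, or_iff_left hw0] at hBw
  obtain ⟨m, hm, rfl⟩ := Complex.exists_int_of_integral_exp_mul_eq_zero hBw
  exact hA m hm (mem_spectrum_of_mulVec_eq_smul hw0 hAw)

theorem isUnit_expIntegral_of_real (A : Matrix n n ℝ)
    (hA : ∀ m : ℤ, m ≠ 0 → 2 * π * I * m ∉ spectrum ℂ (A.map (algebraMap ℝ ℂ))) :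
    IsUnit (expIntegral A) := by
  have h := isUnit_expIntegral _ hA
  rw [expIntegral_map_algebraMap, isUnit_iff_isUnit_det] at h
  rw [isUnit_iff_isUnit_det, ← isUnit_map_iff (algebraMap ℝ ℂ), RingHom.map_det]
  exact h

end

end Matrix

/-- If the (complex) spectrum of a real `k×k` matrix `Ã` contains no nonzero element of
`2πi ℤ`, then `C ↦ ∫₀¹ e^{Ã(1−s)} C ds` is a linear isomorphism of `ℝᵏ`; equivalently,
the (entrywise) integral matrix `∫₀¹ e^{Ãs} ds` is invertible. -/
theorem stmt3 {k : ℕ} (At : Matrix (Fin k) (Fin k) ℝ)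
    (hspec : ∀ m : ℤ, m ≠ 0 →
      (2 * Real.pi * Complex.I * (m : ℂ)) ∉ spectrum ℂ (At.map (algebraMap ℝ ℂ))) :
    Function.Bijective
      (fun C : Fin k → ℝ =>
        (Matrix.of fun i j =>
          ∫ s in (0:ℝ)..1, NormedSpace.exp ((1 - s) • At) i j).mulVec C) ∧
    IsUnit (Matrix.of fun i j : Fin k =>
      ∫ s in (0:ℝ)..1, NormedSpace.exp (s • At) i j) := by
  have hB : IsUnit (expIntegral At) := isUnit_expIntegral_of_real At hspec
  rw [of_intervalIntegral_exp_one_sub_smul]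
  exact ⟨⟨mulVec_injective_iff_isUnit.mpr hB, mulVec_surjective_iff_isUnit.mpr hB⟩, hB⟩
end

section
/- Let A, B ∈ M_k(ℝ) with B invertible, and let C₁, C₂ ∈ ℝᵏ. Consider the linear ODE u′(x) = B⁻¹A u(x) + B⁻¹C₂ + c on [0,1] with fixed initial condition u(0) = u₀ (c a fixed vector). The map C₂ ↦ u(1) ∈ ℝᵏ is affine, and it is bijective if and only if σ(B⁻¹A) ∩ 2πi(ℤ∖{0}) = ∅. -/
/-!
Writing `M = B⁻¹A` and `K = ∫₀¹ exp(sM) ds`, variation of constants gives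
`u(1) = exp(M) u₀ + K (B⁻¹C₂ + c)`, so `C₂ ↦ u(1)` is affine with linear part `K B⁻¹`, and it is
bijective iff `K` is invertible. Over `ℂ`, `K` commutes with `M` and acts on an eigenvector of `M`
with eigenvalue `μ` by the scalar `∫₀¹ e^{sμ} ds`, which is `1` for `μ = 0` and `(e^μ - 1)/μ`
otherwise; it vanishes exactly on `2πi(ℤ ∖ {0})`. The kernel of a non-invertible `K` is
`M`-invariant, hence contains an eigenvector of `M`, so `K` is invertible iff no eigenvalue of `M`
lies in `2πi(ℤ ∖ {0})`.
-/

open Matrix Complex Real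

-- Any norm would do; the `ℓ∞` operator norm makes square matrices a Banach algebra.
attribute [local instance] Matrix.linftyOpNormedAddCommGroup Matrix.linftyOpNormedSpace
  Matrix.linftyOpNormedRing Matrix.linftyOpNormedAlgebra

namespace Module.End

variable {K V : Type*} [Field K] [IsAlgClosed K] [AddCommGroup V] [Module K V]
  [FiniteDimensional K V]

theorem isUnit_iff_of_commute_of_apply_eigenvector {f g : End K V} (hfg : Commute f g)
    {φ : K → K} (hφ : ∀ μ v, f.HasEigenvector μ v → g v = φ μ • v) :
    IsUnit g ↔ ∀ μ ∈ spectrum K f, φ μ ≠ 0 := by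
  refine ⟨fun hg μ hμ hφμ => ?_, fun h => by_contra fun hg => ?_⟩
  · obtain ⟨v, hv⟩ := (hasEigenvalue_iff_mem_spectrum.2 hμ).exists_hasEigenvector
    have hgv : g v = g 0 := by rw [hφ μ v hv, hφμ, zero_smul, map_zero]
    exact hv.2 (((isUnit_iff g).1 hg).injective hgv)
  · have hinv : ∀ v ∈ LinearMap.ker g, f v ∈ LinearMap.ker g := fun v hv => by
      rw [LinearMap.mem_ker] at hv ⊢
      rw [← mul_apply, ← hfg.eq, mul_apply, hv, map_zero]
    have : Nontrivial (LinearMap.ker g) := Submodule.nontrivial_iff_ne_bot.2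
      fun hbot => hg ((LinearMap.isUnit_iff_ker_eq_bot g).2 hbot)
    obtain ⟨μ, hμ⟩ := exists_eigenvalue (f.restrict hinv)
    obtain ⟨w, hw⟩ := hμ.exists_hasEigenvector
    have hfw : f.HasEigenvector μ w :=
      ⟨eigenspace_restrict_le_eigenspace f hinv μ ⟨w, hw.1, rfl⟩, by simpa using hw.2⟩
    have hgw : φ μ • (w : V) = 0 := by rw [← hφ μ w hfw]; exact w.2
    exact h μ (hasEigenvalue_iff_mem_spectrum.1 (hasEigenvalue_of_hasEigenvector hfw))
      ((smul_eq_zero.1 hgw).resolve_right hfw.2)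

end Module.End

theorem Complex.integral_exp_mul_ne_zero_iff (μ : ℂ) :
    ∫ s in (0 : ℝ)..1, Complex.exp (μ * s) ≠ 0 ↔ ∀ m : ℤ, m ≠ 0 → μ ≠ 2 * π * I * m := by
  rcases eq_or_ne μ 0 with rfl | hμ
  · simp [Real.pi_ne_zero, I_ne_zero]
  · rw [integral_exp_mul_complex hμ]
    simp only [ofReal_one, mul_one, ofReal_zero, mul_zero, Complex.exp_zero, ne_eq,
      div_eq_zero_iff, hμ, or_false, sub_eq_zero, Complex.exp_eq_one_iff, not_exists]
    refine forall_congr' fun m => ⟨fun h _ => by rwa [mul_comm], fun h hμm => ?_⟩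
    rcases eq_or_ne m 0 with rfl | hm
    · simp [hμm] at hμ
    · exact h hm (by rw [hμm, mul_comm])

theorem Commute.intervalIntegral_right {A : Type*} [NormedRing A] [NormedAlgebra ℝ A]
    [CompleteSpace A] {a : A} {f : ℝ → A} (hf : Continuous f) (h : ∀ s, Commute a (f s))
    (t₀ t₁ : ℝ) : Commute a (∫ s in t₀..t₁, f s) := by
  have hl := (ContinuousLinearMap.mul ℝ A a).intervalIntegral_comp_comm
    (hf.intervalIntegrable (μ := MeasureTheory.volume) t₀ t₁)
  have hr := ((ContinuousLinearMap.mul ℝ A).flip a).intervalIntegral_comp_comm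
    (hf.intervalIntegrable (μ := MeasureTheory.volume) t₀ t₁)
  simp only [ContinuousLinearMap.mul_apply', ContinuousLinearMap.flip_apply] at hl hr
  rw [Commute, SemiconjBy, ← hl, ← hr]
  exact intervalIntegral.integral_congr fun s _ => (h s).eq

namespace Matrix

variable {m n : Type*} [Fintype m] [Fintype n]

theorem mulVec_bijective_iff_isUnit [DecidableEq n] {K : Type*} [Field K] {A : Matrix n n K} :
    Function.Bijective A.mulVec ↔ IsUnit A :=
  ⟨fun h => mulVec_injective_iff_isUnit.1 h.1,
    fun h => ⟨mulVec_injective_iff_isUnit.2 h, mulVec_surjective_iff_isUnit.2 h⟩⟩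

theorem isUnit_map_iff [DecidableEq n] {K L : Type*} [Field K] [Field L] (f : K →+* L)
    (A : Matrix n n K) : IsUnit (A.map f) ↔ IsUnit A := by
  simp only [isUnit_iff_isUnit_det, ← RingHom.mapMatrix_apply, ← RingHom.map_det,
    isUnit_iff_ne_zero, map_ne_zero]

theorem isUnit_iff_of_commute_of_mulVec_eq_smul [DecidableEq n] {K : Type*} [Field K]
    [IsAlgClosed K] {X Y : Matrix n n K} (hXY : Commute X Y) {φ : K → K}
    (hφ : ∀ μ v, X *ᵥ v = μ • v → Y *ᵥ v = φ μ • v) :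
    IsUnit Y ↔ ∀ μ ∈ spectrum K X, φ μ ≠ 0 := by
  rw [← _root_.isUnit_map_iff toLinAlgEquiv' Y, ← spectrum_toLin']
  exact Module.End.isUnit_iff_of_commute_of_apply_eigenvector (hXY.map toLinAlgEquiv')
    fun μ v hv => hφ μ v hv.apply_eq_smul

noncomputable def mulVecL {𝕜 : Type*} [NontriviallyNormedField 𝕜] :
    Matrix m n 𝕜 →L[𝕜] (n → 𝕜) →L[𝕜] m → 𝕜 :=
  LinearMap.mkContinuous₂
    (LinearMap.mk₂ 𝕜 (· *ᵥ ·) add_mulVec (fun c A v => smul_mulVec c A v) mulVec_add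
      (fun c A v => mulVec_smul A c v) : Matrix m n 𝕜 →ₗ[𝕜] (n → 𝕜) →ₗ[𝕜] m → 𝕜)
    1 fun A v => by rw [one_mul]; exact linfty_opNorm_mulVec A v

theorem _root_.HasDerivAt.mulVec {𝕜 : Type*} [NontriviallyNormedField 𝕜] {A : 𝕜 → Matrix m n 𝕜}
    {u : 𝕜 → n → 𝕜} {A' : Matrix m n 𝕜} {u' : n → 𝕜} {t : 𝕜} (hA : HasDerivAt A A' t)
    (hu : HasDerivAt u u' t) :
    HasDerivAt (fun s => A s *ᵥ u s) (A' *ᵥ u t + A t *ᵥ u') t := by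
  rw [add_comm]
  exact mulVecL.hasDerivAt_of_bilinear (fun _ => hA) (fun _ => hu)

theorem intervalIntegral_mulVec {𝕜 : Type*} [RCLike 𝕜] {A : ℝ → Matrix m n 𝕜} {a b : ℝ}
    (hA : Continuous A) (v : n → 𝕜) :
    (∫ s in a..b, A s) *ᵥ v = ∫ s in a..b, A s *ᵥ v :=
  (((mulVecL : Matrix m n 𝕜 →L[𝕜] _).flip v).intervalIntegral_comp_comm
    (hA.intervalIntegrable a b)).symm

variable [DecidableEq n]

theorem exp_mulVec_of_mulVec_eq_smul_s6 {𝕜 : Type*} [RCLike 𝕜] {X : Matrix n n 𝕜} {μ : 𝕜}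
    {v : n → 𝕜} (h : X *ᵥ v = μ • v) : NormedSpace.exp X *ᵥ v = NormedSpace.exp μ • v := by
  have hpow : ∀ k : ℕ, (X ^ k) *ᵥ v = μ ^ k • v := by
    intro k
    induction k with
    | zero => simp
    | succ k ih => rw [pow_succ', ← mulVec_mulVec, ih, mulVec_smul, h, smul_smul, ← pow_succ]
  have hX : HasSum (fun k => ((k.factorial : 𝕜)⁻¹ • X ^ k) *ᵥ v) (NormedSpace.exp X *ᵥ v) :=
    (NormedSpace.exp_series_hasSum_exp' (𝕂 := 𝕜) X).map (mulVec.addMonoidHomLeft v)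
      (continuous_id.matrix_mulVec continuous_const)
  have hμ := (NormedSpace.exp_series_hasSum_exp' (𝕂 := 𝕜) μ).smul_const v
  simp only [smul_mulVec, hpow, smul_assoc] at hX hμ
  exact hX.unique hμ

theorem variation_of_constants (M : Matrix n n ℝ) {u : ℝ → n → ℝ} {w : n → ℝ}
    (hu : ∀ x ∈ Set.Icc (0 : ℝ) 1, HasDerivAt u (M *ᵥ u x + w) x) :
    u 1 = NormedSpace.exp M *ᵥ u 0 + (∫ s in (0 : ℝ)..1, NormedSpace.exp (s • M)) *ᵥ w := by
  set E : ℝ → Matrix n n ℝ := fun y => NormedSpace.exp ((1 - y) • M)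
  have hE : ∀ y, HasDerivAt E (-(E y * M)) y := fun y => by
    have h := (hasDerivAt_exp_smul_const (𝕂 := ℝ) M (1 - y)).scomp y
      ((hasDerivAt_id y).const_sub 1)
    simp only [neg_smul, one_smul] at h
    exact h
  have hEu : ∀ x ∈ Set.uIcc (0 : ℝ) 1, HasDerivAt (fun y => E y *ᵥ u y) (E x *ᵥ w) x := by
    intro x hx
    rw [Set.uIcc_of_le zero_le_one] at hx
    refine ((hE x).mulVec (hu x hx)).congr_deriv ?_
    rw [neg_mulVec, ← mulVec_mulVec, mulVec_add]
    abel
  have hFTC := intervalIntegral.integral_eq_sub_of_hasDerivAt hEu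
    ((by fun_prop : Continuous fun x => E x *ᵥ w).intervalIntegrable 0 1)
  have hflip := intervalIntegral.integral_comp_sub_left (fun s => NormedSpace.exp (s • M) *ᵥ w)
    (a := 0) (b := 1) 1
  simp only [sub_self, sub_zero] at hflip
  simp only [E, sub_self, zero_smul, NormedSpace.exp_zero, one_mulVec, sub_zero, one_smul] at hFTC
  rw [intervalIntegral_mulVec (by fun_prop), ← hflip, hFTC]
  abel

theorem map_intervalIntegral_exp_smul (M : Matrix n n ℝ) (t₀ t₁ : ℝ) :
    (∫ s in t₀..t₁, NormedSpace.exp (s • M)).map (algebraMap ℝ ℂ) =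
      ∫ s in t₀..t₁, NormedSpace.exp (s • M.map (algebraMap ℝ ℂ)) := by
  set φ := (Algebra.ofId ℝ ℂ).mapMatrix (m := n)
  have hφ : Continuous φ := continuous_id.matrix_map Complex.continuous_ofReal
  have hL := (⟨φ.toLinearMap, hφ⟩ : Matrix n n ℝ →L[ℝ] Matrix n n ℂ).intervalIntegral_comp_comm
    ((by fun_prop : Continuous fun s : ℝ => NormedSpace.exp (s • M)).intervalIntegrable
      (μ := MeasureTheory.volume) t₀ t₁)
  change ∫ s in t₀..t₁, φ (NormedSpace.exp (s • M)) = φ _ at hL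
  change φ _ = _
  rw [← hL]
  refine intervalIntegral.integral_congr fun s _ => ?_
  exact (NormedSpace.map_exp φ hφ (s • M)).trans (by rw [map_smul]; rfl)

theorem commute_intervalIntegral_exp_smul (X : Matrix n n ℂ) (t₀ t₁ : ℝ) :
    Commute X (∫ s in t₀..t₁, NormedSpace.exp (s • X)) :=
  Commute.intervalIntegral_right (by fun_prop)
    (fun s => ((Commute.refl X).smul_right s).exp_right) t₀ t₁

theorem intervalIntegral_exp_smul_mulVec_of_mulVec_eq_smul {X : Matrix n n ℂ} {μ : ℂ}
    {v : n → ℂ} (h : X *ᵥ v = μ • v) (t₀ t₁ : ℝ) :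
    (∫ s in t₀..t₁, NormedSpace.exp (s • X)) *ᵥ v = (∫ s in t₀..t₁, Complex.exp (μ * s)) • v := by
  rw [intervalIntegral_mulVec (by fun_prop), ← intervalIntegral.integral_smul_const]
  refine intervalIntegral.integral_congr fun s _ => ?_
  rw [exp_mulVec_of_mulVec_eq_smul_s6 (μ := s • μ) (by rw [smul_mulVec, h, smul_assoc]),
    ← Complex.exp_eq_exp_ℂ, Complex.real_smul, mul_comm]

theorem isUnit_intervalIntegral_exp_smul_iff (X : Matrix n n ℂ) :
    IsUnit (∫ s in (0 : ℝ)..1, NormedSpace.exp (s • X)) ↔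
      ∀ m : ℤ, m ≠ 0 → 2 * π * I * m ∉ spectrum ℂ X := by
  rw [isUnit_iff_of_commute_of_mulVec_eq_smul (commute_intervalIntegral_exp_smul X 0 1)
    fun μ v h => intervalIntegral_exp_smul_mulVec_of_mulVec_eq_smul h 0 1]
  exact ⟨fun h m hm hmem => (Complex.integral_exp_mul_ne_zero_iff _).1 (h _ hmem) m hm rfl,
    fun h μ hμ => (Complex.integral_exp_mul_ne_zero_iff μ).2 fun m hm hμm => h m hm (hμm ▸ hμ)⟩

end Matrix

/-- For the linear ODE `u′ = B⁻¹A u + B⁻¹C₂ + c` on `[0,1]` with `u(0) = u₀`, the map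
`C₂ ↦ u(1)` is affine, and it is bijective iff `σ(B⁻¹A) ∩ 2πi(ℤ∖{0}) = ∅`. -/
theorem stmt6 {k : ℕ} (A B : Matrix (Fin k) (Fin k) ℝ) (hB : IsUnit B)
    (c u₀ : Fin k → ℝ)
    (sol : (Fin k → ℝ) → ℝ → (Fin k → ℝ))
    (hsol0 : ∀ C₂, sol C₂ 0 = u₀)
    (hsol : ∀ C₂, ∀ x ∈ Set.Icc (0:ℝ) 1,
      HasDerivAt (sol C₂)
        ((B⁻¹ * A).mulVec (sol C₂ x) + B⁻¹.mulVec C₂ + c) x) :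
    (∃ (L : (Fin k → ℝ) →ₗ[ℝ] (Fin k → ℝ)) (b : Fin k → ℝ),
      ∀ C₂, sol C₂ 1 = L C₂ + b) ∧
    (Function.Bijective (fun C₂ => sol C₂ 1) ↔
      ∀ m : ℤ, m ≠ 0 →
        (2 * Real.pi * Complex.I * (m : ℂ)) ∉
          spectrum ℂ ((B⁻¹ * A).map (algebraMap ℝ ℂ))) := by
  set M := B⁻¹ * A
  set K := ∫ s in (0 : ℝ)..1, NormedSpace.exp (s • M)
  have hsol1 : ∀ C₂, sol C₂ 1 = (K * B⁻¹) *ᵥ C₂ + (NormedSpace.exp M *ᵥ u₀ + K *ᵥ c) := by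
    intro C₂
    rw [M.variation_of_constants (u := sol C₂) fun x hx => add_assoc (M *ᵥ sol C₂ x) _ c ▸
      hsol C₂ x hx, hsol0, ← mulVec_mulVec, mulVec_add]
    abel
  refine ⟨⟨(K * B⁻¹).mulVecLin, _, hsol1⟩, ?_⟩
  rw [show (fun C₂ => sol C₂ 1) = Equiv.addRight _ ∘ (K * B⁻¹).mulVec from funext hsol1,
    Equiv.comp_bijective, mulVec_bijective_iff_isUnit,
    IsUnit.mul_right_iff (isUnit_nonsing_inv_iff.2 hB), ← Matrix.isUnit_map_iff (algebraMap ℝ ℂ),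
    map_intervalIntegral_exp_smul, isUnit_intervalIntegral_exp_smul_iff]
end

section
/- Let F : ℝ → ℝ be C¹ with F(ρ*) = 0, F′(ρ*) = 0, F″(ρ*) exists with F″(ρ*) < 0, and F(ρ) < 0 for ρ > ρ*. Then any solution of ρ′ = F(ρ) with ρ(0) > ρ* close enough to ρ* converges to ρ* as x → ∞ at an algebraic rate: there exist constants 0 < c₁ ≤ c₂ such that c₁/x ≤ ρ(x) − ρ* ≤ c₂/x for all large x. -/
/-!
By l'Hôpital's rule `F ρ / (ρ - ρ*)² → F″(ρ*)/2` as `ρ ↓ ρ*`, so on a small interval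
`(ρ*, ρ* + δ)` the field is squeezed between `-k₂ (ρ - ρ*)²` and `-k₁ (ρ - ρ*)²` with
`0 < k₁ ≤ k₂`. For a solution staying in that interval, `v = 1/(u - ρ*)` satisfies
`v' = -F(u)/(u - ρ*)² ∈ [k₁, k₂]`, so `v` grows linearly and `u - ρ*` decays like `1/x`.
The solution does stay there: it decreases because `F < 0`, and the same bound on `v`
keeps it away from `ρ*` on every bounded time interval.
-/

open Set Filter Topology

lemma image_sub_le_mul_sub_of_hasDerivAt_le {g g' : ℝ → ℝ} {x y C : ℝ} (hxy : x ≤ y)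
    (hg : ∀ t ∈ Icc x y, HasDerivAt g (g' t) t) (hC : ∀ t ∈ Ioo x y, g' t ≤ C) :
    g y - g x ≤ C * (y - x) := by
  rcases hxy.eq_or_lt with rfl | hlt
  · simp
  obtain ⟨c, hc, hslope⟩ := exists_hasDerivAt_eq_slope g g' hlt
    (fun t ht => (hg t ht).continuousAt.continuousWithinAt)
    (fun t ht => hg t (Ioo_subset_Icc_self ht))
  rw [eq_div_iff (sub_pos.2 hlt).ne'] at hslope
  rw [← hslope]
  exact mul_le_mul_of_nonneg_right (hC c hc) (sub_pos.2 hlt).le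

lemma mul_sub_le_image_sub_of_le_hasDerivAt {g g' : ℝ → ℝ} {x y C : ℝ} (hxy : x ≤ y)
    (hg : ∀ t ∈ Icc x y, HasDerivAt g (g' t) t) (hC : ∀ t ∈ Ioo x y, C ≤ g' t) :
    C * (y - x) ≤ g y - g x := by
  have := image_sub_le_mul_sub_of_hasDerivAt_le (g := -g) (g' := -g') (C := -C) hxy
    (fun t ht => (hg t ht).neg) (fun t ht => neg_le_neg (hC t ht))
  simp only [Pi.neg_apply] at this
  linarith

lemma tendsto_div_sq_of_hasDerivAt_deriv {F : ℝ → ℝ} {ρ₀ L : ℝ} (hF : Differentiable ℝ F)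
    (h0 : F ρ₀ = 0) (h1 : deriv F ρ₀ = 0) (h2 : HasDerivAt (deriv F) L ρ₀) :
    Tendsto (fun ρ => F ρ / (ρ - ρ₀) ^ 2) (𝓝[>] ρ₀) (𝓝 (L / 2)) := by
  have hsq : ∀ ρ, HasDerivAt (fun ρ => (ρ - ρ₀) ^ 2) (2 * (ρ - ρ₀)) ρ := fun ρ =>
    (((hasDerivAt_id ρ).sub_const ρ₀).fun_pow 2).congr_deriv (by simp)
  have hslope : Tendsto (fun ρ => deriv F ρ / (2 * (ρ - ρ₀))) (𝓝[>] ρ₀) (𝓝 (L / 2)) := by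
    refine (((hasDerivAt_iff_tendsto_slope.1 h2).mono_left (nhdsGT_le_nhdsNE ρ₀)).div_const
      2).congr fun ρ => ?_
    rw [slope_def_field, h1, sub_zero, div_div, mul_comm]
  refine HasDerivAt.lhopital_zero_nhdsGT (.of_forall fun ρ => (hF ρ).hasDerivAt)
    (.of_forall hsq) ?_ ?_ ?_ hslope
  · filter_upwards [self_mem_nhdsWithin] with ρ hρ
    exact mul_ne_zero two_ne_zero (sub_pos.2 hρ).ne'
  · simpa [h0] using (hF ρ₀).continuousAt.tendsto.mono_left nhdsWithin_le_nhds
  · simpa using (hsq ρ₀).continuousAt.tendsto.mono_left nhdsWithin_le_nhds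

lemma forall_mem_of_forall_Ico_mem {u : ℝ → ℝ} {U : Set ℝ} {a : ℝ} (hU : IsOpen U)
    (hu : ContinuousOn u (Ici a)) (ha : u a ∈ U)
    (hstep : ∀ x > a, (∀ t ∈ Ico a x, u t ∈ U) → u x ∈ U) : ∀ x ≥ a, u x ∈ U := by
  by_contra! ⟨x₀, hx₀, hx₀U⟩
  set B := Ici a ∩ u ⁻¹' Uᶜ
  have hB : IsClosed B := hu.preimage_isClosed_of_isClosed isClosed_Ici hU.isClosed_compl
  have hbdd : BddBelow B := ⟨a, fun x hx => hx.1⟩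
  have hmem : sInf B ∈ B := hB.csInf_mem ⟨x₀, hx₀, hx₀U⟩ hbdd
  have hlt : a < sInf B := hmem.1.lt_of_ne fun h => hmem.2 (h ▸ ha)
  exact hmem.2 <| hstep _ hlt fun t ht => by_contra fun h => notMem_of_lt_csInf ht.2 hbdd ⟨ht.1, h⟩

section Riccati

variable {F u : ℝ → ℝ} {ρ₀ δ k₁ k₂ : ℝ}
  (hquad : ∀ ρ ∈ Ioo ρ₀ (ρ₀ + δ), -k₂ * (ρ - ρ₀) ^ 2 ≤ F ρ ∧ F ρ ≤ -k₁ * (ρ - ρ₀) ^ 2)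
  (hu : ∀ x ∈ Ici (0 : ℝ), HasDerivAt u (F (u x)) x)

include hquad hu

lemma inv_sub_bounds_of_quadratic_bounds {x : ℝ} (hx : 0 ≤ x)
    (hI : ∀ t ∈ Icc 0 x, u t ∈ Ioo ρ₀ (ρ₀ + δ)) :
    k₁ * x ≤ (u x - ρ₀)⁻¹ - (u 0 - ρ₀)⁻¹ ∧ (u x - ρ₀)⁻¹ - (u 0 - ρ₀)⁻¹ ≤ k₂ * x := by
  have hpos : ∀ t ∈ Icc 0 x, 0 < (u t - ρ₀) ^ 2 := fun t ht => pow_pos (sub_pos.2 (hI t ht).1) 2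
  have hv : ∀ t ∈ Icc 0 x,
      HasDerivAt (fun t => (u t - ρ₀)⁻¹) (-F (u t) / (u t - ρ₀) ^ 2) t := fun t ht =>
    ((hu t ht.1).sub_const ρ₀).inv (sub_pos.2 (hI t ht).1).ne'
  have hlo := mul_sub_le_image_sub_of_le_hasDerivAt (C := k₁) hx hv fun t ht => by
    rw [le_div_iff₀ (hpos t (Ioo_subset_Icc_self ht))]
    linarith [(hquad _ (hI t (Ioo_subset_Icc_self ht))).2]
  have hup := image_sub_le_mul_sub_of_hasDerivAt_le (C := k₂) hx hv fun t ht => by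
    rw [div_le_iff₀ (hpos t (Ioo_subset_Icc_self ht))]
    linarith [(hquad _ (hI t (Ioo_subset_Icc_self ht))).1]
  simp only [sub_zero] at hlo hup
  exact ⟨hlo, hup⟩

lemma mem_Ioo_of_quadratic_bounds (hk₁ : 0 ≤ k₁) (hk₂ : 0 ≤ k₂)
    (h0 : u 0 ∈ Ioo ρ₀ (ρ₀ + δ)) : ∀ x ≥ 0, u x ∈ Ioo ρ₀ (ρ₀ + δ) := by
  refine forall_mem_of_forall_Ico_mem isOpen_Ioo
    (fun x hx => (hu x hx).continuousAt.continuousWithinAt) h0 fun x hx hprev => ⟨?_, ?_⟩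
  · set M := (u 0 - ρ₀)⁻¹ + k₂ * x
    have hM : 0 < M := by have := sub_pos.2 h0.1; positivity
    have hbound : ∀ t ∈ Ico 0 x, M⁻¹ ≤ u t - ρ₀ := fun t ht => by
      have hrt := (inv_sub_bounds_of_quadratic_bounds hquad hu ht.1
        fun s hs => hprev s ⟨hs.1, hs.2.trans_lt ht.2⟩).2
      rw [inv_le_comm₀ hM (sub_pos.2 (hprev t ht).1)]
      nlinarith [ht.2]
    have hxcl : x ∈ closure (Ico 0 x) := by rw [closure_Ico hx.ne]; exact right_mem_Icc.2 hx.le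
    have := continuousWithinAt_const.closure_le hxcl
      ((hu x hx.le).continuousAt.continuousWithinAt.sub continuousWithinAt_const) hbound
    simp only [Pi.sub_apply] at this
    linarith [inv_pos.2 hM]
  · have hdec := image_sub_le_mul_sub_of_hasDerivAt_le (C := 0) hx.le
      (fun t ht => hu t ht.1) fun t ht => by
        have hI := hprev t (Ioo_subset_Ico_self ht)
        nlinarith [(hquad _ hI).2, sq_nonneg (u t - ρ₀)]
    linarith [h0.2]

lemma algebraic_decay_of_quadratic_bounds (hk₁ : 0 < k₁) (hk : k₁ ≤ k₂)
    (h0 : u 0 ∈ Ioo ρ₀ (ρ₀ + δ)) :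
    ∃ c₁ c₂ X : ℝ, 0 < c₁ ∧ c₁ ≤ c₂ ∧ 0 < X ∧
      ∀ x ≥ X, c₁ / x ≤ u x - ρ₀ ∧ u x - ρ₀ ≤ c₂ / x := by
  have hk₂ : 0 < k₂ := hk₁.trans_le hk
  have hv₀ : 0 < (u 0 - ρ₀)⁻¹ := inv_pos.2 (sub_pos.2 h0.1)
  have hI := mem_Ioo_of_quadratic_bounds hquad hu hk₁.le hk₂.le h0
  refine ⟨1 / (2 * k₂), 1 / k₁, (u 0 - ρ₀)⁻¹ / k₂, by positivity, ?_, by positivity,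
    fun x hx => ?_⟩
  · exact one_div_le_one_div_of_le hk₁ (by linarith)
  have hxpos : 0 < x := lt_of_lt_of_le (by positivity) hx
  have hv₀x : (u 0 - ρ₀)⁻¹ ≤ k₂ * x := by rwa [ge_iff_le, div_le_iff₀' hk₂] at hx
  have hw : 0 < u x - ρ₀ := sub_pos.2 (hI x hxpos.le).1
  obtain ⟨hlo, hup⟩ :=
    inv_sub_bounds_of_quadratic_bounds hquad hu hxpos.le fun t ht => hI t ht.1
  rw [div_div, one_div, div_div, one_div]
  constructor
  · rw [inv_le_comm₀ (by positivity) hw]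
    linarith
  · rw [le_inv_comm₀ hw (by positivity)]
    linarith

end Riccati

theorem stmt13_general (F : ℝ → ℝ) (hF : ContDiff ℝ 1 F) (ρs : ℝ)
    (h0 : F ρs = 0) (h1 : deriv F ρs = 0)
    (L : ℝ) (h2 : HasDerivAt (deriv F) L ρs) (hL : L < 0) :
    ∃ δ > (0:ℝ), ∀ u : ℝ → ℝ,
      u 0 ∈ Set.Ioo ρs (ρs + δ) →
      (∀ x ∈ Set.Ici (0:ℝ), HasDerivAt u (F (u x)) x) →
      ∃ c₁ c₂ X : ℝ, 0 < c₁ ∧ c₁ ≤ c₂ ∧ 0 < X ∧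
        ∀ x ≥ X, c₁ / x ≤ u x - ρs ∧ u x - ρs ≤ c₂ / x := by
  have hratio := tendsto_div_sq_of_hasDerivAt_deriv (hF.differentiable one_ne_zero) h0 h1 h2
  obtain ⟨r, hr, hsub⟩ := mem_nhdsGT_iff_exists_Ioo_subset.1 <|
    hratio (Ioo_mem_nhds (a := L) (b := L / 4) (by linarith) (by linarith))
  have hquad : ∀ ρ ∈ Ioo ρs r, -(-L) * (ρ - ρs) ^ 2 ≤ F ρ ∧ F ρ ≤ -(-L / 4) * (ρ - ρs) ^ 2 := by
    intro ρ hρ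
    have hw := pow_pos (sub_pos.2 hρ.1) 2
    obtain ⟨hlo, hup⟩ : F ρ / (ρ - ρs) ^ 2 ∈ Ioo L (L / 4) := hsub hρ
    rw [lt_div_iff₀ hw] at hlo
    rw [div_lt_iff₀ hw] at hup
    constructor <;> linarith
  refine ⟨r - ρs, sub_pos.2 hr, fun u hu0 hu => ?_⟩
  rw [add_sub_cancel] at hu0
  exact algebraic_decay_of_quadratic_bounds (δ := r - ρs) (by rwa [add_sub_cancel]) hu
    (by linarith) (by linarith) (by rwa [add_sub_cancel])

/-- Algebraic decay at a degenerate (Riccati-type) rest point: if `F(ρ*) = 0`,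
`F′(ρ*) = 0`, `F″(ρ*) < 0` and `F < 0` for `ρ > ρ*`, then solutions of `ρ′ = F(ρ)`
starting slightly above `ρ*` satisfy `c₁/x ≤ ρ(x) − ρ* ≤ c₂/x` for large `x`. -/
theorem stmt13 (F : ℝ → ℝ) (hF : ContDiff ℝ 1 F) (ρs : ℝ)
    (h0 : F ρs = 0) (h1 : deriv F ρs = 0)
    (L : ℝ) (h2 : HasDerivAt (deriv F) L ρs) (hL : L < 0)
    (hneg : ∀ ρ > ρs, F ρ < 0) :
    ∃ δ > (0:ℝ), ∀ u : ℝ → ℝ,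
      u 0 ∈ Set.Ioo ρs (ρs + δ) →
      (∀ x ∈ Set.Ici (0:ℝ), HasDerivAt u (F (u x)) x) →
      ∃ c₁ c₂ X : ℝ, 0 < c₁ ∧ c₁ ≤ c₂ ∧ 0 < X ∧
        ∀ x ≥ X, c₁ / x ≤ u x - ρs ∧ u x - ρs ≤ c₂ / x :=
  stmt13_general F hF ρs h0 h1 L h2 hL
end

section
/- Let M : [0,1] → M_k(ℝ) be continuous with β₀ I ≤ M(y) ≤ β₁ I (symmetric, 0 < β₀ ≤ β₁) for all y, and let C ∈ ℝᵏ. Define U(x) = U₀ + (∫₀ˣ M(y) dy) C. Then for each x ∈ (0,1], the vector U(x) − U₀ lies within angle θ = arccos(β₀/β₁) of C, and x β₀ |C| ≤ |U(x) − U₀| ≤ x β₁ |C|. -/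
open Matrix Set intervalIntegral

set_option maxHeartbeats 1000000

lemma ii_sum {ι : Type*} (s : Finset ι) (f : ι → ℝ → ℝ) (x : ℝ)
    (h : ∀ i ∈ s, IntervalIntegrable (f i) MeasureTheory.volume 0 x) :
    IntervalIntegrable (fun y => ∑ i ∈ s, f i y) MeasureTheory.volume 0 x := by
  have := IntervalIntegrable.sum s h
  have e : (∑ i ∈ s, f i) = fun y => ∑ i ∈ s, f i y := by funext y; simp
  rwa [e] at this

lemma cs_aux {k : ℕ} (B : Matrix (Fin k) (Fin k) ℝ) (hsym : B.IsSymm)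
    (hpsd : ∀ v : Fin k → ℝ, 0 ≤ v ⬝ᵥ B.mulVec v) (u v : Fin k → ℝ) :
    (u ⬝ᵥ B.mulVec v) ^ 2 ≤ (u ⬝ᵥ B.mulVec u) * (v ⬝ᵥ B.mulVec v) := by
  have hswap : ∀ a b : Fin k → ℝ, a ⬝ᵥ B.mulVec b = b ⬝ᵥ B.mulVec a := by
    intro a b
    rw [Matrix.dotProduct_mulVec, dotProduct_comm, ← Matrix.mulVec_transpose, hsym.eq]
  have key : ∀ t : ℝ, 0 ≤ (v ⬝ᵥ B.mulVec v) * (t * t) + (2 * (u ⬝ᵥ B.mulVec v)) * t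
      + (u ⬝ᵥ B.mulVec u) := by
    intro t
    have h := hpsd (u + t • v)
    have expand : (u + t • v) ⬝ᵥ B.mulVec (u + t • v)
        = (v ⬝ᵥ B.mulVec v) * (t * t) + (2 * (u ⬝ᵥ B.mulVec v)) * t + (u ⬝ᵥ B.mulVec u) := by
      rw [Matrix.mulVec_add, Matrix.mulVec_smul, add_dotProduct, smul_dotProduct,
        dotProduct_add, dotProduct_add, dotProduct_smul, dotProduct_smul,
        hswap v u]
      simp [smul_eq_mul]; ring
    linarith [expand ▸ h]
  have hd := discrim_le_zero key
  rw [discrim] at hd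
  nlinarith [hd]

lemma dot_cs {k : ℕ} (u v : Fin k → ℝ) : (u ⬝ᵥ v) ^ 2 ≤ (u ⬝ᵥ u) * (v ⬝ᵥ v) := by
  have := cs_aux (1 : Matrix (Fin k) (Fin k) ℝ) (Matrix.isSymm_one)
    (fun w => by
      rw [Matrix.one_mulVec]
      exact Finset.sum_nonneg fun i _ => mul_self_nonneg _) u v
  simpa [Matrix.one_mulVec] using this

/-- For `M : [0,1] → M_k(ℝ)` continuous, symmetric, with `β₀ I ≤ M(y) ≤ β₁ I`
(`0 < β₀ ≤ β₁`), and `U(x) = U₀ + (∫₀ˣ M(y) dy) C`, the vector `U(x) − U₀` lies within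
angle `arccos(β₀/β₁)` of `C`, with `xβ₀|C| ≤ |U(x) − U₀| ≤ xβ₁|C|`. -/
theorem stmt17 {k : ℕ} (M : ℝ → Matrix (Fin k) (Fin k) ℝ)
    (hM : ContinuousOn M (Set.Icc 0 1))
    (β₀ β₁ : ℝ) (h0 : 0 < β₀) (h01 : β₀ ≤ β₁)
    (hsym : ∀ y ∈ Set.Icc (0:ℝ) 1, (M y).IsSymm)
    (hlow : ∀ y ∈ Set.Icc (0:ℝ) 1, ∀ v : Fin k → ℝ,
      β₀ * (v ⬝ᵥ v) ≤ v ⬝ᵥ (M y).mulVec v)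
    (hhigh : ∀ y ∈ Set.Icc (0:ℝ) 1, ∀ v : Fin k → ℝ,
      v ⬝ᵥ (M y).mulVec v ≤ β₁ * (v ⬝ᵥ v))
    (C U₀ : Fin k → ℝ) (U : ℝ → (Fin k → ℝ))
    (hU : U = fun x => U₀ +
      (Matrix.of fun i j => ∫ y in (0:ℝ)..x, M y i j).mulVec C) :
    ∀ x ∈ Set.Ioc (0:ℝ) 1,
      (β₀ / β₁) * (Real.sqrt (C ⬝ᵥ C) *
          Real.sqrt ((U x - U₀) ⬝ᵥ (U x - U₀))) ≤ C ⬝ᵥ (U x - U₀) ∧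
      x * β₀ * Real.sqrt (C ⬝ᵥ C) ≤ Real.sqrt ((U x - U₀) ⬝ᵥ (U x - U₀)) ∧
      Real.sqrt ((U x - U₀) ⬝ᵥ (U x - U₀)) ≤ x * β₁ * Real.sqrt (C ⬝ᵥ C) := by
  intro x hx
  obtain ⟨hx0, hx1⟩ := hx
  set B : Matrix (Fin k) (Fin k) ℝ := Matrix.of fun i j => ∫ y in (0:ℝ)..x, M y i j with hB
  have hsub : Set.uIcc (0:ℝ) x ⊆ Set.Icc 0 1 := by
    rw [Set.uIcc_of_le hx0.le]
    exact Set.Icc_subset_Icc le_rfl hx1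
  -- entrywise interval integrability
  have hent : ∀ i j, IntervalIntegrable (fun y => M y i j) MeasureTheory.volume 0 x := by
    intro i j
    apply ContinuousOn.intervalIntegrable
    exact (((continuous_apply j).comp (continuous_apply i)).comp_continuousOn (hM.mono hsub))
  -- quadratic/bilinear forms integrability
  have hqint : ∀ u v : Fin k → ℝ,
      IntervalIntegrable (fun y => u ⬝ᵥ (M y).mulVec v) MeasureTheory.volume 0 x := by
    intro u v
    have : (fun y => u ⬝ᵥ (M y).mulVec v)
        = fun y => ∑ i, ∑ j, u i * (M y i j * v j) := by
      funext y
      simp [dotProduct, Matrix.mulVec, Finset.mul_sum]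
    rw [this]
    apply ii_sum
    intro i _
    apply ii_sum
    intro j _
    exact (((hent i j).mul_const (v j)).const_mul (u i))
  -- representation of the bilinear form of B as an integral
  have hrep : ∀ u v : Fin k → ℝ,
      u ⬝ᵥ B.mulVec v = ∫ y in (0:ℝ)..x, u ⬝ᵥ (M y).mulVec v := by
    intro u v
    have h1 : u ⬝ᵥ B.mulVec v = ∑ i, ∑ j, u i * ((∫ y in (0:ℝ)..x, M y i j) * v j) := by
      simp [hB, dotProduct, Matrix.mulVec, Finset.mul_sum]
    rw [h1]
    have h2 : ∀ i j, u i * ((∫ y in (0:ℝ)..x, M y i j) * v j)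
        = ∫ y in (0:ℝ)..x, u i * (M y i j * v j) := by
      intro i j
      rw [← intervalIntegral.integral_mul_const, ← intervalIntegral.integral_const_mul]
    simp_rw [h2]
    calc ∑ i, ∑ j, ∫ y in (0:ℝ)..x, u i * (M y i j * v j)
        = ∑ i, ∫ y in (0:ℝ)..x, ∑ j, u i * (M y i j * v j) := by
          refine Finset.sum_congr rfl fun i _ => ?_
          rw [intervalIntegral.integral_finset_sum
            (fun j _ => ((hent i j).mul_const (v j)).const_mul (u i))]
      _ = ∫ y in (0:ℝ)..x, ∑ i, ∑ j, u i * (M y i j * v j) :=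
          (intervalIntegral.integral_finset_sum (fun i _ => ii_sum _ _ _
            (fun j _ => ((hent i j).mul_const (v j)).const_mul (u i)))).symm
      _ = ∫ y in (0:ℝ)..x, u ⬝ᵥ (M y).mulVec v := by
          congr 1
          funext y
          simp [dotProduct, Matrix.mulVec, Finset.mul_sum]
  -- bounds on the quadratic form of B
  have hBlow : ∀ v : Fin k → ℝ, x * β₀ * (v ⬝ᵥ v) ≤ v ⬝ᵥ B.mulVec v := by
    intro v
    rw [hrep v v]
    have : x * β₀ * (v ⬝ᵥ v) = ∫ _ in (0:ℝ)..x, β₀ * (v ⬝ᵥ v) := by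
      rw [intervalIntegral.integral_const]; simp [smul_eq_mul]; ring
    rw [this]
    apply intervalIntegral.integral_mono_on hx0.le (intervalIntegrable_const) (hqint v v)
    intro y hy
    exact hlow y (Set.Icc_subset_Icc le_rfl hx1 hy) v
  have hBhigh : ∀ v : Fin k → ℝ, v ⬝ᵥ B.mulVec v ≤ x * β₁ * (v ⬝ᵥ v) := by
    intro v
    rw [hrep v v]
    have : x * β₁ * (v ⬝ᵥ v) = ∫ _ in (0:ℝ)..x, β₁ * (v ⬝ᵥ v) := by
      rw [intervalIntegral.integral_const]; simp [smul_eq_mul]; ring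
    rw [this]
    apply intervalIntegral.integral_mono_on hx0.le (hqint v v) (intervalIntegrable_const)
    intro y hy
    exact hhigh y (Set.Icc_subset_Icc le_rfl hx1 hy) v
  have hdotnn : ∀ v : Fin k → ℝ, 0 ≤ v ⬝ᵥ v :=
    fun v => Finset.sum_nonneg fun i _ => mul_self_nonneg _
  have hBpsd : ∀ v : Fin k → ℝ, 0 ≤ v ⬝ᵥ B.mulVec v := by
    intro v
    have h1 := hBlow v
    have h2 : 0 ≤ x * β₀ * (v ⬝ᵥ v) :=
      mul_nonneg (mul_nonneg hx0.le h0.le) (hdotnn v)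
    linarith
  have hBsym : B.IsSymm := by
    rw [Matrix.IsSymm]
    ext i j
    simp only [Matrix.transpose_apply, hB, Matrix.of_apply]
    apply intervalIntegral.integral_congr
    intro y hy
    have hs := (hsym y (hsub hy)).eq
    calc M y j i = (M y)ᵀ i j := rfl
      _ = M y i j := by rw [hs]
  have hw : U x - U₀ = B.mulVec C := by rw [hU]; simp [hB]
  rw [hw]
  have hb1 : 0 < β₁ := lt_of_lt_of_le h0 h01
  set w : Fin k → ℝ := B.mulVec C with hwdef
  have hCw_low : x * β₀ * (C ⬝ᵥ C) ≤ C ⬝ᵥ w := hBlow C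
  have hww : w ⬝ᵥ w = C ⬝ᵥ B.mulVec w := by
    rw [Matrix.dotProduct_mulVec, ← Matrix.mulVec_transpose, hBsym.eq]
    exact dotProduct_comm _ _
  have hcs := cs_aux B hBsym hBpsd C w
  have hA2 : w ⬝ᵥ w ≤ x * β₁ * (C ⬝ᵥ B.mulVec C) := by
    rcases eq_or_lt_of_le (hdotnn w) with hz | hz
    · have h2 : 0 ≤ x * β₁ * (C ⬝ᵥ B.mulVec C) :=
        mul_nonneg (mul_nonneg hx0.le hb1.le) (hBpsd C)
      linarith
    · have h3 := hBhigh w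
      nlinarith [hcs, hww, hBpsd C, hdotnn w]
  have hA3 : w ⬝ᵥ w ≤ (x * β₁) ^ 2 * (C ⬝ᵥ C) := by
    have h3 := hBhigh C
    have h4 := mul_le_mul_of_nonneg_left h3 (mul_nonneg hx0.le hb1.le)
    nlinarith [hA2, h4]
  set s := Real.sqrt (C ⬝ᵥ C) with hsdef
  set t := Real.sqrt (w ⬝ᵥ w) with htdef
  have hs0 : 0 ≤ s := Real.sqrt_nonneg _
  have ht0 : 0 ≤ t := Real.sqrt_nonneg _
  have hss : s * s = C ⬝ᵥ C := Real.mul_self_sqrt (hdotnn C)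
  have htt : t * t = w ⬝ᵥ w := Real.mul_self_sqrt (hdotnn w)
  have G3 : t ≤ x * β₁ * s := by
    have h1 : t ≤ Real.sqrt ((x * β₁) ^ 2 * (C ⬝ᵥ C)) := Real.sqrt_le_sqrt hA3
    rwa [Real.sqrt_mul (sq_nonneg _), Real.sqrt_sq (mul_nonneg hx0.le hb1.le)] at h1
  have hCwle : C ⬝ᵥ w ≤ s * t := by
    have h1 := dot_cs C w
    nlinarith [mul_nonneg hs0 ht0]
  refine ⟨?_, ?_, G3⟩
  · have h1 : (β₀ / β₁) * (s * t) ≤ (β₀ / β₁) * (s * (x * β₁ * s)) := by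
      apply mul_le_mul_of_nonneg_left _ (div_nonneg h0.le hb1.le)
      exact mul_le_mul_of_nonneg_left G3 hs0
    have h2 : (β₀ / β₁) * (s * (x * β₁ * s)) = x * β₀ * (s * s) := by
      field_simp
    rw [h2, hss] at h1
    linarith
  · rcases eq_or_lt_of_le hs0 with hsz | hsz
    · have : x * β₀ * s = 0 := by rw [← hsz]; ring
      linarith
    · have h1 : x * β₀ * (s * s) ≤ s * t := by rw [hss]; linarith
      nlinarith
end
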